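/- Let G be a trigraph and d a natural number. (1) If G admits a d-sequence, then G admits a parallel d-sequence. (2) If G admits a parallel d-sequence, then G admits a (2d+1)-sequence. -/

import Mathlib

/-- A trigraph: a finite vertex set with disjoint black and red edge sets. -/
structure Trigraph (V : Type*) where
  verts : Finset V
  black : V → V → Prop
  red : V → V → Prop
  black_symm : ∀ u v, black u v → black v u
  red_symm : ∀ u v, red u v → red v u
  black_irrefl : ∀ u, ¬ black u u
  red_irrefl : ∀ u, ¬ red u u
  black_red_disjoint : ∀ u v, black u v → ¬ red u v
  black_mem : ∀ u v, black u v → u ∈ verts ∧ v ∈ verts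
  red_mem : ∀ u v, red u v → u ∈ verts ∧ v ∈ verts

namespace Trigraph

variable {V : Type*} [DecidableEq V]

/-- The red degree of a vertex. -/
noncomputable def redDeg (G : Trigraph V) (x : V) : ℕ := {y | G.red x y}.ncard

/-- `G` is a `d`-trigraph: every vertex is incident to at most `d` red edges. -/
def RedDegLE (G : Trigraph V) (d : ℕ) : Prop := ∀ x, G.redDeg x ≤ d

/-- `G'` is obtained from `G` by contracting the two distinct vertices `u` and `v`
(the contracted vertex is represented by `u`, and `v` is deleted). -/
def IsContractionAt (G G' : Trigraph V) (u v : V) : Prop :=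
  u ∈ G.verts ∧ v ∈ G.verts ∧ u ≠ v ∧
  G'.verts = G.verts.erase v ∧
  (∀ x y, x ≠ u → y ≠ u → (G'.black x y ↔ (G.black x y ∧ x ≠ v ∧ y ≠ v))) ∧
  (∀ x y, x ≠ u → y ≠ u → (G'.red x y ↔ (G.red x y ∧ x ≠ v ∧ y ≠ v))) ∧
  (∀ x, x ≠ u → x ≠ v → (G'.black u x ↔ (G.black u x ∧ G.black v x))) ∧
  (∀ x, x ≠ u → x ≠ v →
    (G'.red u x ↔
      ((G.black u x ∨ G.red u x ∨ G.black v x ∨ G.red v x) ∧ ¬ (G.black u x ∧ G.black v x))))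

/-- `G'` is obtained from `G` by contracting some pair of vertices. -/
def IsContraction (G G' : Trigraph V) : Prop := ∃ u v, IsContractionAt G G' u v

/-- `G` admits a `d`-sequence: a sequence `G = G_n, …, G_1` of `d`-trigraphs, each obtained
from the previous one by a contraction, ending in a one-vertex trigraph. -/
def HasSeq (G : Trigraph V) (d : ℕ) : Prop :=
  ∃ f : ℕ → Trigraph V,
    f G.verts.card = G ∧
    (∀ i, 1 ≤ i → i < G.verts.card → IsContraction (f (i + 1)) (f i)) ∧
    (∀ i, 1 ≤ i → i ≤ G.verts.card → (f i).RedDegLE d)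

/-- The twin-width of a trigraph: the least `d` such that it admits a `d`-sequence. -/
noncomputable def tww (G : Trigraph V) : ℕ := sInf {d | G.HasSeq d}

end Trigraph

/-- The trigraph induced by a simple graph `G` on the vertex set `s`: all edges black. -/
def SimpleGraph.toTrigraphOn {V : Type*} (G : SimpleGraph V) (s : Finset V) : Trigraph V where
  verts := s
  black u v := G.Adj u v ∧ u ∈ s ∧ v ∈ s
  red _ _ := False
  black_symm := fun _ _ ⟨h, hu, hv⟩ => ⟨h.symm, hv, hu⟩
  red_symm := fun _ _ h => h.elim
  black_irrefl := fun u h => G.loopless.irrefl u h.1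
  red_irrefl := fun _ h => h
  black_red_disjoint := fun _ _ _ h => h
  black_mem := fun _ _ ⟨_, hu, hv⟩ => ⟨hu, hv⟩
  red_mem := fun _ _ h => h.elim

/-- The trigraph associated to a finite simple graph: all edges black. -/
def SimpleGraph.toTrigraph {V : Type*} [Fintype V] (G : SimpleGraph V) : Trigraph V :=
  G.toTrigraphOn Finset.univ

namespace Trigraph

variable {V : Type*} [DecidableEq V]

/-- `G'` is obtained from `G` by a parallel contraction: the successive contraction of a
(nonempty) set of pairwise disjoint pairs of vertices. -/
def IsParallelContraction (G G' : Trigraph V) : Prop :=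
  ∃ (l : List (V × V)) (f : ℕ → Trigraph V),
    l ≠ [] ∧
    (l.map Prod.fst ++ l.map Prod.snd).Nodup ∧
    f 0 = G ∧ f l.length = G' ∧
    ∀ i (h : i < l.length), IsContractionAt (f i) (f (i + 1)) (l.get ⟨i, h⟩).1 (l.get ⟨i, h⟩).2

/-- `G` admits a parallel `d`-sequence of length `k`: a sequence `G = G_k, …, G_1` of
`d`-trigraphs, each obtained from the previous one by a parallel contraction, ending in a
one-vertex trigraph. -/
def HasParallelSeq (G : Trigraph V) (d k : ℕ) : Prop :=
  ∃ f : ℕ → Trigraph V,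
    f 0 = G ∧ (f k).verts.card = 1 ∧
    (∀ i, i ≤ k → (f i).RedDegLE d) ∧
    (∀ i, i < k → IsParallelContraction (f i) (f (i + 1)))

end Trigraph

/-!
A `d`-sequence is a parallel `d`-sequence whose parallel contractions contract one pair each.
Conversely, unfold every parallel contraction `G_i → G_{i-1}` of a parallel `d`-sequence into
its single contractions. In an intermediate trigraph, a red edge `xy` either joins the two
vertices of a pair still to be contracted (for a given `x` there is at most one such `y`), or
survives as a red edge between the representatives of `x` and `y` in the `d`-trigraph
`G_{i-1}`; since the pairs are disjoint, each vertex of `G_{i-1}` represents at most two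
vertices, so the red degree stays at most `2d + 1`.
-/

namespace Trigraph

variable {V : Type*}

open Classical in
noncomputable def redNbrs (G : Trigraph V) (x : V) : Finset V := {y ∈ G.verts | G.red x y}

@[simp]
lemma mem_redNbrs {G : Trigraph V} {x y : V} : y ∈ G.redNbrs x ↔ G.red x y := by
  classical
  simpa [redNbrs] using fun h => (G.red_mem x y h).2

lemma ne_of_red {G : Trigraph V} {x y : V} (h : G.red x y) : x ≠ y := by
  rintro rfl
  exact G.red_irrefl x h

lemma redDeg_eq_card_redNbrs [DecidableEq V] (G : Trigraph V) (x : V) :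
    G.redDeg x = (G.redNbrs x).card := by
  rw [redDeg, ← Set.ncard_coe_finset]
  congr 1
  ext y
  simp

lemma RedDegLE.mono [DecidableEq V] {G : Trigraph V} {d d' : ℕ} (hG : G.RedDegLE d)
    (h : d ≤ d') : G.RedDegLE d' :=
  fun x => (hG x).trans h

def InPair (x : V) (p : V × V) : Prop := x = p.1 ∨ x = p.2

def SharePair (l : List (V × V)) (x y : V) : Prop := ∃ p ∈ l, InPair x p ∧ InPair y p

/-- The pairs of `l` are pairwise disjoint and each consists of two distinct vertices. -/
def PairsNodup (l : List (V × V)) : Prop := (l.map Prod.fst ++ l.map Prod.snd).Nodup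

section Pairs

variable {l t : List (V × V)} {p q : V × V} {x y : V}

lemma PairsNodup.sublist (h : PairsNodup l) (hsub : t.Sublist l) : PairsNodup t :=
  ((hsub.map _).append (hsub.map _)).nodup h

lemma PairsNodup.eq_of_inPair (h : PairsNodup l) (hp : p ∈ l) (hq : q ∈ l) (hxp : InPair x p)
    (hxq : InPair x q) : p = q := by
  obtain ⟨hfst, hsnd, hdisj⟩ := List.nodup_append'.1 h
  rcases hxp with rfl | rfl <;> rcases hxq with h | h
  · exact List.inj_on_of_nodup_map hfst hp hq h
  · exact absurd (h ▸ List.mem_map_of_mem hq) (hdisj (List.mem_map_of_mem hp))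
  · exact absurd (List.mem_map_of_mem hp) (hdisj (h ▸ List.mem_map_of_mem hq))
  · exact List.inj_on_of_nodup_map hsnd hp hq h

lemma PairsNodup.fst_ne_snd (h : PairsNodup l) (hp : p ∈ l) : p.1 ≠ p.2 := fun he =>
  have ⟨_, _, hdisj⟩ := List.nodup_append'.1 h
  hdisj (List.mem_map_of_mem hp) (he ▸ List.mem_map_of_mem hp)

lemma PairsNodup.not_inPair_head (h : PairsNodup (p :: t)) (hq : q ∈ t) (hxq : InPair x q) :
    ¬ InPair x p := by
  intro hxp
  obtain rfl := h.eq_of_inPair List.mem_cons_self (List.mem_cons_of_mem _ hq) hxp hxq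
  exact (List.nodup_cons.1 ((List.nodup_append.1 h).1.of_map _)).1 hq

lemma PairsNodup.card_le_one_of_forall_sharePair (h : PairsNodup l) {s : Finset V}
    (hs : ∀ y ∈ s, x ≠ y ∧ SharePair l x y) : s.card ≤ 1 := by
  refine Finset.card_le_one.2 fun y hy z hz => ?_
  obtain ⟨hxy, p, hp, hxp, hyp⟩ := hs y hy
  obtain ⟨hxz, q, hq, hxq, hzq⟩ := hs z hz
  obtain rfl := h.eq_of_inPair hp hq hxp hxq
  unfold InPair at *
  grind

end Pairs

def contractVertex [DecidableEq V] (p : V × V) (x : V) : V := if x = p.2 then p.1 else x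

/-- The vertex that represents `x` once the pairs of `l` have been contracted in order, the
first vertex of a pair representing the pair. -/
def contractVertices [DecidableEq V] : List (V × V) → V → V
  | [], x => x
  | p :: t, x => contractVertices t (contractVertex p x)

section Contraction

variable [DecidableEq V] {A B : Trigraph V} {u v : V} {p : V × V} {x y : V}

lemma IsContractionAt.card_verts (h : A.IsContractionAt B u v) :
    A.verts.card = B.verts.card + 1 := by
  obtain ⟨-, hv, -, hverts, -⟩ := h
  rw [hverts, Finset.card_erase_add_one hv]

lemma IsContraction.card_verts (h : A.IsContraction B) : A.verts.card = B.verts.card + 1 :=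
  have ⟨_, _, h⟩ := h
  h.card_verts

lemma IsContractionAt.red_merged (h : A.IsContractionAt B u v) (hx : A.red u x ∨ A.red v x)
    (hxu : x ≠ u) (hxv : x ≠ v) : B.red u x := by
  obtain ⟨-, -, -, -, -, -, -, hred⟩ := h
  refine (hred x hxu hxv).2 ⟨by tauto, fun ⟨hu, hv⟩ => ?_⟩
  rcases hx with hx | hx
  exacts [A.black_red_disjoint _ _ hu hx, A.black_red_disjoint _ _ hv hx]

lemma IsContractionAt.red_contractVertex_of_inPair (h : A.IsContractionAt B p.1 p.2)
    (hxy : A.red x y) (hx : InPair x p) (hy : ¬ InPair y p) :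
    B.red (contractVertex p x) (contractVertex p y) := by
  unfold InPair at hx hy
  push Not at hy
  have hx' : contractVertex p x = p.1 := by
    have hne : p.1 ≠ p.2 := h.2.2.1
    rcases hx with rfl | rfl <;> simp [contractVertex, hne]
  rw [hx', contractVertex, if_neg hy.2]
  exact h.red_merged (by rcases hx with rfl | rfl <;> tauto) hy.1 hy.2

lemma IsContractionAt.red_contractVertex (h : A.IsContractionAt B p.1 p.2) (hxy : A.red x y)
    (hne : ¬ (InPair x p ∧ InPair y p)) : B.red (contractVertex p x) (contractVertex p y) := by
  by_cases hx : InPair x p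
  · exact h.red_contractVertex_of_inPair hxy hx fun hy => hne ⟨hx, hy⟩
  by_cases hy : InPair y p
  · exact B.red_symm _ _ (h.red_contractVertex_of_inPair (A.red_symm _ _ hxy) hy hx)
  unfold InPair at hx hy
  push Not at hx hy
  rw [contractVertex, contractVertex, if_neg hx.2, if_neg hy.2]
  obtain ⟨-, -, -, -, -, hred, -⟩ := h
  exact (hred x y hx.1 hy.1).2 ⟨hxy, hx.2, hy.2⟩

end Contraction

section ContractVertices

variable [DecidableEq V] {l t : List (V × V)} {p q : V × V} {x y b : V}

lemma contractVertices_of_forall_not_inPair (hx : ∀ p ∈ l, ¬ InPair x p) :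
    contractVertices l x = x := by
  induction l with
  | nil => rfl
  | cons p t ih =>
    have hxp : contractVertex p x = x := if_neg fun h => hx p List.mem_cons_self (Or.inr h)
    rw [contractVertices, hxp]
    exact ih fun q hq => hx q (List.mem_cons_of_mem _ hq)

lemma PairsNodup.contractVertices_of_inPair (h : PairsNodup l) (hp : p ∈ l) (hx : InPair x p) :
    contractVertices l x = p.1 := by
  induction l generalizing x with
  | nil => cases hp
  | cons q t ih =>
    rcases List.mem_cons.1 hp with rfl | hpt
    · have hxp : contractVertex p x = p.1 := by
        rcases hx with rfl | rfl <;> simp [contractVertex, h.fst_ne_snd List.mem_cons_self]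
      rw [contractVertices, hxp]
      exact contractVertices_of_forall_not_inPair fun r hr hpr =>
        h.not_inPair_head hr hpr (Or.inl rfl)
    · have hxq : contractVertex q x = x := if_neg fun he => h.not_inPair_head hpt hx (Or.inr he)
      rw [contractVertices, hxq]
      exact ih (h.sublist (List.sublist_cons_self _ _)) hpt hx

lemma PairsNodup.sharePair_of_contractVertices_eq (h : PairsNodup l)
    (hy : contractVertices l y = b) (hne : b ≠ y) : SharePair l b y := by
  by_cases hyl : ∃ p ∈ l, InPair y p
  · obtain ⟨p, hp, hyp⟩ := hyl
    rw [h.contractVertices_of_inPair hp hyp] at hy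
    exact ⟨p, hp, Or.inl hy.symm, hyp⟩
  · push Not at hyl
    exact absurd (hy ▸ contractVertices_of_forall_not_inPair hyl) hne

lemma PairsNodup.card_le_two_of_forall_contractVertices_eq (h : PairsNodup l) {s : Finset V}
    (hs : ∀ y ∈ s, contractVertices l y = b) : s.card ≤ 2 := by
  have hrest : (s.erase b).card ≤ 1 := h.card_le_one_of_forall_sharePair fun y hy =>
    have ⟨hyb, hys⟩ := Finset.mem_erase.1 hy
    ⟨hyb.symm, h.sharePair_of_contractVertices_eq (hs y hys) hyb.symm⟩
  have := Finset.pred_card_le_card_erase (s := s) (a := b)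
  omega

lemma PairsNodup.inPair_of_contractVertex (h : PairsNodup (p :: t)) (hq : q ∈ t)
    (hx : InPair (contractVertex p x) q) : InPair x q := by
  unfold contractVertex at hx
  split at hx
  · exact absurd (Or.inl rfl) (h.not_inPair_head hq hx)
  · exact hx

lemma PairsNodup.sharePair_of_contractVertex (h : PairsNodup (p :: t))
    (hs : SharePair t (contractVertex p x) (contractVertex p y)) : SharePair (p :: t) x y :=
  have ⟨q, hq, hxq, hyq⟩ := hs
  ⟨q, List.mem_cons_of_mem _ hq, h.inPair_of_contractVertex hq hxq,
    h.inPair_of_contractVertex hq hyq⟩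

end ContractVertices

def ContractsAlong [DecidableEq V] (g : ℕ → Trigraph V) (l : List (V × V)) : Prop :=
  ∀ i (h : i < l.length), (g i).IsContractionAt (g (i + 1)) l[i].1 l[i].2

section ContractsAlong

variable [DecidableEq V] {g : ℕ → Trigraph V} {l t : List (V × V)} {p : V × V} {x y : V}

lemma ContractsAlong.head (hg : ContractsAlong g (p :: t)) :
    (g 0).IsContractionAt (g 1) p.1 p.2 :=
  hg 0 (Nat.succ_pos _)

lemma ContractsAlong.tail (hg : ContractsAlong g (p :: t)) :
    ContractsAlong (fun i => g (i + 1)) t :=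
  fun i hi => hg (i + 1) (Nat.succ_lt_succ hi)

lemma ContractsAlong.drop (hg : ContractsAlong g l) (i : ℕ) :
    ContractsAlong (fun j => g (i + j)) (l.drop i) := fun j hj => by
  rw [List.length_drop] at hj
  simpa [Nat.add_assoc] using hg (i + j) (by omega)

lemma ContractsAlong.red_contractVertices (hg : ContractsAlong g l) (hl : PairsNodup l)
    (hxy : (g 0).red x y) :
    (g l.length).red (contractVertices l x) (contractVertices l y) ∨ SharePair l x y := by
  induction l generalizing g x y with
  | nil => exact Or.inl hxy
  | cons p t ih =>
    by_cases hp : InPair x p ∧ InPair y p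
    · exact Or.inr ⟨p, List.mem_cons_self, hp⟩
    rcases ih hg.tail (hl.sublist (List.sublist_cons_self _ _))
      (hg.head.red_contractVertex hxy hp) with h | h
    · exact Or.inl h
    · exact Or.inr (hl.sharePair_of_contractVertex h)

theorem ContractsAlong.redDegLE_two_mul_add_one (hg : ContractsAlong g l) (hl : PairsNodup l)
    {d : ℕ} (hd : (g l.length).RedDegLE d) : (g 0).RedDegLE (2 * d + 1) := by
  classical
  intro x
  set S := (g 0).redNbrs x
  set T := (g l.length).redNbrs (contractVertices l x)
  have hsplit :
      S ⊆ {y ∈ S | contractVertices l y ∈ T} ∪ {y ∈ S | x ≠ y ∧ SharePair l x y} := by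
    intro y hy
    have hxy := mem_redNbrs.1 hy
    rcases hg.red_contractVertices hl hxy with h | h
    · exact Finset.mem_union_left _ (Finset.mem_filter.2 ⟨hy, mem_redNbrs.2 h⟩)
    · exact Finset.mem_union_right _ (Finset.mem_filter.2 ⟨hy, ne_of_red hxy, h⟩)
  have hfar : {y ∈ S | contractVertices l y ∈ T}.card ≤ 2 * T.card :=
    Finset.card_le_mul_card_image_of_maps_to (fun y hy => (Finset.mem_filter.1 hy).2) 2
      fun _ _ => hl.card_le_two_of_forall_contractVertices_eq fun y hy => (Finset.mem_filter.1 hy).2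
  have hnear : {y ∈ S | x ≠ y ∧ SharePair l x y}.card ≤ 1 :=
    hl.card_le_one_of_forall_sharePair fun y hy => (Finset.mem_filter.1 hy).2
  have hT : T.card ≤ d := by
    simpa only [redDeg_eq_card_redNbrs] using hd (contractVertices l x)
  rw [redDeg_eq_card_redNbrs]
  calc S.card ≤ _ := Finset.card_le_card hsplit
    _ ≤ _ := Finset.card_union_le _ _
    _ ≤ 2 * d + 1 := by omega

end ContractsAlong

section Sequences

variable [DecidableEq V] {G G' : Trigraph V} {d k : ℕ}

lemma IsContraction.isParallelContraction (h : G.IsContraction G') :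
    G.IsParallelContraction G' := by
  obtain ⟨u, v, huv⟩ := h
  refine ⟨[(u, v)], fun i => if i = 0 then G else G', List.cons_ne_nil _ _, ?_, rfl, rfl, ?_⟩
  · simpa using huv.2.2.1
  · intro i hi
    obtain rfl : i = 0 := by simpa using hi
    exact huv

lemma HasSeq.redDegLE (h : G.HasSeq d) (hG : G.verts.Nonempty) : G.RedDegLE d := by
  obtain ⟨f, hf, -, hfd⟩ := h
  exact hf ▸ hfd _ hG.card_pos le_rfl

lemma hasSeq_of_card_eq_one (h1 : G.verts.card = 1) (hd : G.RedDegLE d) : G.HasSeq d :=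
  ⟨fun _ => G, rfl, fun _ _ _ => by omega, fun _ _ _ => hd⟩

lemma HasSeq.cons (hGG' : G.IsContraction G') (hG : G.RedDegLE d) (h : G'.HasSeq d) :
    G.HasSeq d := by
  obtain ⟨f, hf, hfc, hfd⟩ := h
  have hcard := hGG'.card_verts
  refine ⟨fun i => if i = G.verts.card then G else f i, if_pos rfl, fun i hi hin => ?_,
    fun i hi hin => ?_⟩
  · dsimp only
    rw [if_neg hin.ne]
    by_cases hi' : i + 1 = G.verts.card
    · obtain rfl : i = G'.verts.card := by omega
      rwa [if_pos hi', hf]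
    · rw [if_neg hi']
      exact hfc i hi (by omega)
  · dsimp only
    split_ifs
    exacts [hG, hfd i hi (by omega)]

lemma HasSeq.exists_contraction (h : G.HasSeq d) (hG : 1 < G.verts.card) :
    ∃ G', G.IsContraction G' ∧ G'.HasSeq d := by
  obtain ⟨f, hf, hfc, hfd⟩ := h
  have hGG' : G.IsContraction (f (G.verts.card - 1)) := by
    simpa [Nat.sub_add_cancel hG.le, hf] using hfc (G.verts.card - 1) (by omega) (by omega)
  have hcard := hGG'.card_verts
  have hcard' : (f (G.verts.card - 1)).verts.card = G.verts.card - 1 := by omega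
  exact ⟨_, hGG', f, by rw [hcard'], fun i hi hin => hfc i hi (by omega),
    fun i hi hin => hfd i hi (by omega)⟩

lemma HasSeq.of_contractsAlong {g : ℕ → Trigraph V} {l : List (V × V)}
    (hg : ContractsAlong g l) (hd : ∀ i ≤ l.length, (g i).RedDegLE d)
    (h : (g l.length).HasSeq d) : (g 0).HasSeq d := by
  induction l generalizing g with
  | nil => exact h
  | cons p t ih =>
    exact .cons ⟨_, _, hg.head⟩ (hd 0 (Nat.zero_le _))
      (ih hg.tail (fun i hi => hd (i + 1) (Nat.succ_le_succ hi)) h)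

lemma HasSeq.of_isParallelContraction (hGG' : G.IsParallelContraction G') (hG' : G'.RedDegLE d)
    (h : G'.HasSeq (2 * d + 1)) : G.HasSeq (2 * d + 1) := by
  obtain ⟨l, g, -, hl, rfl, rfl, hg⟩ := hGG'
  refine HasSeq.of_contractsAlong hg (fun i hi => ?_) h
  have hlen : i + (l.drop i).length = l.length := by rw [List.length_drop]; omega
  simpa using (ContractsAlong.drop hg i).redDegLE_two_mul_add_one
    (PairsNodup.sublist hl (List.drop_sublist _ _)) (by simpa only [hlen] using hG')

lemma HasParallelSeq.redDegLE (h : G.HasParallelSeq d k) : G.RedDegLE d := by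
  obtain ⟨f, hf, -, hfd, -⟩ := h
  exact hf ▸ hfd 0 (Nat.zero_le _)

lemma HasParallelSeq.card_verts (h : G.HasParallelSeq d 0) : G.verts.card = 1 := by
  obtain ⟨f, hf, hf1, -⟩ := h
  rwa [← hf]

lemma hasParallelSeq_zero (h1 : G.verts.card = 1) (hd : G.RedDegLE d) :
    G.HasParallelSeq d 0 :=
  ⟨fun _ => G, rfl, h1, fun _ _ => hd, fun _ h => absurd h (Nat.not_lt_zero _)⟩

lemma HasParallelSeq.cons (hGG' : G.IsParallelContraction G') (hG : G.RedDegLE d)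
    (h : G'.HasParallelSeq d k) : G.HasParallelSeq d (k + 1) := by
  obtain ⟨f, hf, hf1, hfd, hfp⟩ := h
  refine ⟨fun | 0 => G | i + 1 => f i, rfl, hf1, fun i hi => ?_, fun i hi => ?_⟩
  · cases i with
    | zero => exact hG
    | succ i => exact hfd i (by omega)
  · cases i with
    | zero => show G.IsParallelContraction (f 0); rwa [hf]
    | succ i => exact hfp i (by omega)

lemma HasParallelSeq.exists_isParallelContraction (h : G.HasParallelSeq d (k + 1)) :
    ∃ G', G.IsParallelContraction G' ∧ G'.HasParallelSeq d k := by
  obtain ⟨f, rfl, hf1, hfd, hfp⟩ := h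
  exact ⟨f 1, hfp 0 (Nat.succ_pos _), fun i => f (i + 1), rfl, hf1,
    fun i hi => hfd (i + 1) (by omega), fun i hi => hfp (i + 1) (by omega)⟩

theorem HasSeq.hasParallelSeq (h : G.HasSeq d) (hG : G.verts.Nonempty) :
    G.HasParallelSeq d (G.verts.card - 1) := by
  induction hn : G.verts.card - 1 generalizing G with
  | zero => exact hasParallelSeq_zero (by have := hG.card_pos; omega) (h.redDegLE hG)
  | succ n ih =>
    obtain ⟨G', hGG', h'⟩ := h.exists_contraction (by omega)
    have hcard := hGG'.card_verts
    exact .cons hGG'.isParallelContraction (h.redDegLE hG)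
      (ih h' (Finset.card_pos.1 (by omega)) (by omega))

theorem HasParallelSeq.hasSeq (h : G.HasParallelSeq d k) : G.HasSeq (2 * d + 1) := by
  induction k generalizing G with
  | zero => exact hasSeq_of_card_eq_one h.card_verts (h.redDegLE.mono (by omega))
  | succ k ih =>
    obtain ⟨G', hGG', h'⟩ := h.exists_isParallelContraction
    exact .of_isParallelContraction hGG' h'.redDegLE (ih h')

end Sequences

end Trigraph

theorem parallel_sequences_equivalence {V : Type*} [DecidableEq V] (G : Trigraph V) (d : ℕ)
    (hG : G.verts.Nonempty) :
    (G.HasSeq d → ∃ k, G.HasParallelSeq d k) ∧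
    ((∃ k, G.HasParallelSeq d k) → G.HasSeq (2 * d + 1)) :=
  ⟨fun h => ⟨_, h.hasParallelSeq hG⟩, fun ⟨_, h⟩ => h.hasSeq⟩
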